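/- arXiv:1711.10118 — 5 statements merged into one kernel-verified Lean document; each statement's English description precedes it below -/
import Mathlib

section
/- Let d ≥ 1. Let a₀(d), a₁(d), a₂(d), a₃(d) ∈ ℚ be the coefficients of 1, h, h², h³ in the power-series expansion at h = 0 of A_d(h) = ∏_{k=1}^{5d}(5h+k) / ∏_{k=1}^{d}(h+k)⁵, and let b₀(d), b₁(d), b₂(d), b₃(d) ∈ ℚ be the coefficients of 1, x, x², x³ in the power-series expansion at x = 0 of B_d(x) = ∏_{k=1}^{5d}(−5x + (k/d)(x+1)) / ∏_{k=1}^{d}(x − (k/d)(x+1))⁵. Then b₀(d) = (−1)^d a₀(d), b₁(d) = (−1)^{d+1} d·a₁(d), b₂(d) = (−1)^d (d²·a₂(d) + d·a₁(d)), and b₃(d) = (−1)^{d+1}(d³·a₃(d) + 2d²·a₂(d) + d·a₁(d)). Equivalently, substituting x = −h·(1+h)^{−1} into B_d gives B_d(−h(1+h)^{−1}) ≡ (−1)^d·A_d(dh) modulo h⁴. -/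
/-!
Write `W = -d x / (1 + x)`. Since `x - (k/d)(x + 1) = -(1 + x)/d · (W + k)` and
`-5x + (k/d)(x + 1) = (1 + x)/d · (5W + k)`, all factors `(1 + x)/d` cancel in `B_d` and
`B_d(x) = (-1)^d A_d(W(x))`. As `W = -d x + d x² - d x³ + O(x⁴)`, the coefficients of `x⁰, …, x³`
in `A_d ∘ W` are explicit combinations of those of `A_d`.
-/

open PowerSeries Finset

namespace PowerSeries

section CommRing

variable {R : Type*} [CommRing R]

lemma coeff_subst_eq_sum_range {a : R⟦X⟧} (ha : constantCoeff a = 0) (f : R⟦X⟧) (n : ℕ) :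
    coeff n (f.subst a) = ∑ k ∈ range (n + 1), coeff k f * coeff n (a ^ k) := by
  rw [coeff_subst' (HasSubst.of_constantCoeff_zero' ha)]
  refine finsum_eq_sum_of_support_subset _ fun k hk => ?_
  by_contra hkn
  have hnk : n < k := by simpa using hkn
  have hdvd : X ^ k ∣ a ^ k := pow_dvd_pow_of_dvd (X_dvd_iff.mpr ha) k
  exact hk (by simp [X_pow_dvd_iff.mp hdvd n hnk])

lemma constantCoeff_subst_of_constantCoeff_eq_zero {a : R⟦X⟧} (ha : constantCoeff a = 0)
    (f : R⟦X⟧) : constantCoeff (f.subst a) = constantCoeff f := by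
  simpa using coeff_subst_eq_sum_range ha f 0

lemma subst_natCast_mul_X_add_C {a : R⟦X⟧} (ha : HasSubst a) (m : ℕ) (c : R) :
    ((m : R⟦X⟧) * X + C c).subst a = m * a + C c := by
  rw [← coe_substAlgHom ha, map_add, map_mul, map_natCast, substAlgHom_X, ← algebraMap_eq,
    AlgHom.commutes]

/-- The series of `-e X / (1 + X)`. -/
noncomputable def mobius (e : R) : R⟦X⟧ := X * mk fun n => (-1) ^ (n + 1) * e

variable (e : R)

lemma constantCoeff_mobius : constantCoeff (mobius e) = 0 := by
  simp [mobius]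

lemma hasSubst_mobius : HasSubst (mobius e) :=
  HasSubst.of_constantCoeff_zero' (constantCoeff_mobius e)

lemma one_add_X_mul_mobius : (1 + X) * mobius e = -(C e * X) := by
  ext (_ | _ | n) <;> simp [mobius, add_mul, coeff_succ_X_mul, pow_succ]

variable (f : R⟦X⟧)

lemma coeff_zero_subst_mobius : coeff 0 (f.subst (mobius e)) = coeff 0 f := by
  simp [coeff_subst_eq_sum_range (constantCoeff_mobius e)]

lemma coeff_one_subst_mobius : coeff 1 (f.subst (mobius e)) = -(e * coeff 1 f) := by
  rw [coeff_subst_eq_sum_range (constantCoeff_mobius e)]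
  simp [sum_range_succ, mobius, mul_comm]

lemma coeff_two_subst_mobius :
    coeff 2 (f.subst (mobius e)) = e * coeff 1 f + e ^ 2 * coeff 2 f := by
  rw [coeff_subst_eq_sum_range (constantCoeff_mobius e)]
  simp [sum_range_succ, mobius, pow_succ, coeff_mul, Nat.antidiagonal_succ, coeff_X]
  ring

lemma coeff_three_subst_mobius :
    coeff 3 (f.subst (mobius e)) =
      -(e * coeff 1 f) - 2 * e ^ 2 * coeff 2 f - e ^ 3 * coeff 3 f := by
  rw [coeff_subst_eq_sum_range (constantCoeff_mobius e)]
  simp [sum_range_succ, mobius, pow_succ, coeff_mul, Nat.antidiagonal_succ, coeff_X]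
  ring

end CommRing

section Field

variable {K : Type*} [Field K]

protected lemma inv_pow (f : K⟦X⟧) (n : ℕ) : (f ^ n)⁻¹ = f⁻¹ ^ n := by
  induction n with
  | zero => simp
  | succ n ih => rw [pow_succ, PowerSeries.mul_inv_rev, ih, pow_succ']

lemma subst_inv {a : K⟦X⟧} (ha : constantCoeff a = 0) (f : K⟦X⟧) :
    f⁻¹.subst a = (f.subst a)⁻¹ := by
  have hsubst := HasSubst.of_constantCoeff_zero' ha
  by_cases hf : constantCoeff f = 0
  · rw [inv_eq_zero.2 hf, inv_eq_zero.2 (by rwa [constantCoeff_subst_of_constantCoeff_eq_zero ha]),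
      ← coe_substAlgHom hsubst, map_zero]
  · rw [eq_inv_iff_mul_eq_one (by rwa [constantCoeff_subst_of_constantCoeff_eq_zero ha]),
      ← subst_mul hsubst, PowerSeries.inv_mul_cancel _ hf, ← coe_substAlgHom hsubst, map_one]

lemma C_inv_mul_one_add_X_mul_mobius {e : K} (he : e ≠ 0) :
    C e⁻¹ * (1 + X) * mobius e = -X := by
  rw [mul_assoc, one_add_X_mul_mobius, mul_neg, ← mul_assoc, ← map_mul, inv_mul_cancel₀ he,
    map_one, one_mul]

lemma prod_mul_inv_prod_pow_eq_subst_mobius (n d : ℕ) (hd : (d : K) ≠ 0) :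
    (∏ k ∈ Icc 1 (n * d), (-(n : K⟦X⟧) * X + C ((k : K) / d) * (X + 1))) *
        ((∏ k ∈ Icc 1 d, (X - C ((k : K) / d) * (X + 1)))⁻¹) ^ n
      = C ((-1) ^ (n * d)) * ((∏ k ∈ Icc 1 (n * d), ((n : K⟦X⟧) * X + C (k : K))) *
        ((∏ k ∈ Icc 1 d, (X + C (k : K)))⁻¹) ^ n).subst (mobius (d : K)) := by
  have hsubst := hasSubst_mobius (d : K)
  set u : K⟦X⟧ := C (d : K)⁻¹ * (1 + X)
  have hu : u * mobius (d : K) = -X := C_inv_mul_one_add_X_mul_mobius hd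
  have hnum (c : K) :
      -(n : K⟦X⟧) * X + C (c / d) * (X + 1) = u * ((n : K⟦X⟧) * mobius (d : K) + C c) := by
    rw [div_eq_inv_mul, map_mul]
    linear_combination -(n : K⟦X⟧) * hu
  have hden (c : K) : X - C (c / d) * (X + 1) = -u * (mobius (d : K) + C c) := by
    rw [div_eq_inv_mul, map_mul]
    linear_combination hu
  have hlin (c : K) : (X + C c).subst (mobius (d : K)) = mobius (d : K) + C c := by
    simpa using subst_natCast_mul_X_add_C hsubst 1 c
  have hunit : u * (-u)⁻¹ = C (-1) := by
    have hneg : constantCoeff (-u) ≠ 0 := by simpa [u] using hd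
    rw [map_neg, map_one]
    linear_combination -(PowerSeries.mul_inv_cancel _ hneg)
  clear_value u
  simp only [hnum, hden, prod_mul_distrib, prod_const, Nat.card_Icc, add_tsub_cancel_right]
  rw [subst_mul hsubst, subst_pow hsubst, subst_inv (constantCoeff_mobius _),
    ← coe_substAlgHom hsubst, map_prod, map_prod]
  simp only [coe_substAlgHom, subst_natCast_mul_X_add_C hsubst, hlin]
  rw [PowerSeries.mul_inv_rev, PowerSeries.inv_pow, mul_pow, ← pow_mul, mul_comm d n, map_pow,
    ← hunit, mul_pow]
  ring

end Field

end PowerSeries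

/-- Relation between the low-order expansion coefficients of
`A_d(h) = ∏_{k=1}^{5d}(5h+k) / ∏_{k=1}^{d}(h+k)^5` and
`B_d(x) = ∏_{k=1}^{5d}(−5x + (k/d)(x+1)) / ∏_{k=1}^{d}(x − (k/d)(x+1))^5`. -/
theorem stmt_0 (d : ℕ) (hd : 1 ≤ d)
    (A B : PowerSeries ℚ)
    (hA : A = (∏ k ∈ Finset.Icc 1 (5 * d), ((5 : PowerSeries ℚ) * X + C (k : ℚ))) *
        ((∏ k ∈ Finset.Icc 1 d, (X + C (k : ℚ)))⁻¹) ^ 5)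
    (hB : B = (∏ k ∈ Finset.Icc 1 (5 * d),
          ((-5 : PowerSeries ℚ) * X + C ((k : ℚ) / (d : ℚ)) * (X + 1))) *
        ((∏ k ∈ Finset.Icc 1 d, (X - C ((k : ℚ) / (d : ℚ)) * (X + 1)))⁻¹) ^ 5) :
    coeff 0 B = (-1 : ℚ) ^ d * coeff 0 A ∧
    coeff 1 B = (-1 : ℚ) ^ (d + 1) * (d : ℚ) * coeff 1 A ∧
    coeff 2 B = (-1 : ℚ) ^ d * ((d : ℚ) ^ 2 * coeff 2 A + (d : ℚ) * coeff 1 A) ∧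
    coeff 3 B = (-1 : ℚ) ^ (d + 1) *
      ((d : ℚ) ^ 3 * coeff 3 A + 2 * (d : ℚ) ^ 2 * coeff 2 A + (d : ℚ) * coeff 1 A) := by
  have hd0 : (d : ℚ) ≠ 0 := Nat.cast_ne_zero.mpr (by omega)
  have hBA : B = C ((-1) ^ d) * A.subst (mobius (d : ℚ)) := by
    have hsign : (-1 : ℚ) ^ (5 * d) = (-1) ^ d := by rw [pow_mul]; norm_num
    simpa [hA, hB, hsign] using prod_mul_inv_prod_pow_eq_subst_mobius 5 d hd0
  rw [hBA, coeff_C_mul, coeff_C_mul, coeff_C_mul, coeff_C_mul, coeff_zero_subst_mobius,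
    coeff_one_subst_mobius, coeff_two_subst_mobius, coeff_three_subst_mobius]
  refine ⟨rfl, ?_, ?_, ?_⟩ <;> ring
end

section
/- The formal power series I₀ = ∑_{d≥0} ((5d)!/(d!)⁵)·q^d ∈ ℚ[[q]] satisfies the Picard–Fuchs equation of the quintic: θ⁴ I₀ = 5·q·(5θ+1)(5θ+2)(5θ+3)(5θ+4) I₀, where θ = q·d/dq is the formal derivation on ℚ[[q]]. (Equivalently θ⁴I₀ = 5⁵q·∏_{k=1}^{4}(θ + k/5)I₀.) -/
/-!
Comparing coefficients of `q^(n+1)`, the equation says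
`(n+1)⁴ aₙ₊₁ = 5 (5n+1)(5n+2)(5n+3)(5n+4) aₙ`, which for `aₙ = (5n)!/(n!)⁵` follows from
`(5n+5)! = 5 (n+1)(5n+1)(5n+2)(5n+3)(5n+4) (5n)!` and `(n+1)! = (n+1) n!`.
-/

open PowerSeries Nat

namespace PowerSeries

variable {R : Type*} [CommRing R]

noncomputable section

/-- The Euler derivation `θ = q d/dq`. -/
def theta (f : R⟦X⟧) : R⟦X⟧ := mk fun n => n * coeff n f

def fiveThetaAdd (c : R) (f : R⟦X⟧) : R⟦X⟧ := 5 * theta f + C c * f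

@[simp]
theorem coeff_theta (n : ℕ) (f : R⟦X⟧) : coeff n (theta f) = n * coeff n f :=
  coeff_mk _ _

@[simp]
theorem coeff_fiveThetaAdd (c : R) (n : ℕ) (f : R⟦X⟧) :
    coeff n (fiveThetaAdd c f) = (5 * n + c) * coeff n f := by
  rw [fiveThetaAdd, ← map_ofNat C 5, map_add, coeff_C_mul, coeff_C_mul, coeff_theta]
  ring

theorem theta_four_eq_of_coeff_recurrence (f : R⟦X⟧)
    (h : ∀ n : ℕ, ((n : R) + 1) ^ 4 * coeff (n + 1) f =
      5 * ((5 * n + 1) * (5 * n + 2) * (5 * n + 3) * (5 * n + 4)) * coeff n f) :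
    theta (theta (theta (theta f))) =
      5 * X * fiveThetaAdd 1 (fiveThetaAdd 2 (fiveThetaAdd 3 (fiveThetaAdd 4 f))) := by
  ext (_ | n)
  · simp
  · rw [mul_comm (5 : R⟦X⟧) X, mul_assoc, coeff_succ_X_mul, ← map_ofNat C 5, coeff_C_mul]
    simp only [coeff_theta, coeff_fiveThetaAdd, cast_succ]
    linear_combination h n

end

end PowerSeries

theorem quintic_coeff_recurrence (n : ℕ) :
    ((n : ℚ) + 1) ^ 4 * ((5 * (n + 1))! / ((n + 1)! : ℚ) ^ 5) =
      5 * ((5 * n + 1) * (5 * n + 2) * (5 * n + 3) * (5 * n + 4)) * ((5 * n)! / (n ! : ℚ) ^ 5) := by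
  rw [show 5 * (n + 1) = 5 * n + 4 + 1 by ring]
  simp only [factorial_succ]
  push_cast
  field_simp
  ring

/-- The fundamental period `I₀ = ∑ (5d)!/(d!)⁵ qᵈ` satisfies the Picard–Fuchs
equation of the quintic: `θ⁴ I₀ = 5 q (5θ+1)(5θ+2)(5θ+3)(5θ+4) I₀`,
where `θ = q d/dq`. -/
theorem stmt_1 (θ : PowerSeries ℚ → PowerSeries ℚ)
    (hθ : ∀ f, θ f = PowerSeries.mk fun n => (n : ℚ) * coeff n f)
    (L : ℚ → PowerSeries ℚ → PowerSeries ℚ)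
    (hL : ∀ c f, L c f = 5 * θ f + C c * f)
    (I₀ : PowerSeries ℚ)
    (hI₀ : I₀ = PowerSeries.mk fun d => ((5 * d).factorial : ℚ) / ((d.factorial : ℚ)) ^ 5) :
    θ (θ (θ (θ I₀))) = 5 * X * L 1 (L 2 (L 3 (L 4 I₀))) := by
  obtain rfl : θ = theta := funext hθ
  obtain rfl : L = fiveThetaAdd := funext₂ hL
  subst hI₀
  exact theta_four_eq_of_coeff_recurrence _ fun n => by
    simpa only [coeff_mk] using quintic_coeff_recurrence n
end

section
/- For every integer m ≥ 1 and every j ∈ {0,1,2,3}, the following identity holds in ℚ[t][[q]]: ∑_{d≥1} d^{m−1}·(−1)^d·q^d·[ −b_j(d) + m·b_{j−1}(d) − C(m+1,2)·b_{j−2}(d) + C(m+2,3)·b_{j−3}(d) ] = (−1)^{j+1}·( D^{m+j−1}I_j − t·D^{m+j−1}I_{j−1} + (t²/2)·D^{m+j−1}I_{j−2} − (t³/6)·D^{m+j−1}I_{j−3} ) + (−1)^j·C(m+j−1, j)·δ_{m,1}, where C(n,k) denotes the binomial coefficient and δ_{m,1} = 1 if m = 1 and 0 otherwise. -/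
/-!
Introduce a second formal variable `z` and put `A_d(z) = ∑ᵣ a_r(d) zʳ`. The `q^d`-coefficient of
`I_j` is the `zʲ`-coefficient of `e^{tz} A_d(z)`, and `D` acts on `q^d`-coefficients as `∂_t + d`,
which on `e^{tz} A_d(z)` is multiplication by `z + d`. The coefficients `1, -t, t²/2, -t³/6` of the
combination are those of `e^{-tz}`, so `t` cancels and the bracket on the right at `q^d` is the
`zʲ`-coefficient of `(z + d)^{m+j-1} A_d(z)`, a binomial convolution of the `a_r(d)`. For `d = 0`
this is `[zʲ] z^{m+j-1} = δ_{m,1}`, which the correction term cancels; for `d ≥ 1`, matching it with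
the combination of the `b_r(d)` is a Vandermonde-type identity, checked directly for `j ≤ 3`.
-/

open PowerSeries Finset.HasAntidiagonal

namespace GiventalI

section CommSemiring

variable {R : Type*} [CommSemiring R]

noncomputable def shiftedDerivative (n : ℕ) (p : Polynomial R) : Polynomial R :=
  Polynomial.derivative p + n * p

lemma iterate_shiftedDerivative_zero (n N : ℕ) : (shiftedDerivative (R := R) n)^[N] 0 = 0 :=
  Function.iterate_fixed (by simp [shiftedDerivative]) N

lemma coeff_iterate_of_coeff_eq_shiftedDerivative
    {D : PowerSeries (Polynomial R) → PowerSeries (Polynomial R)}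
    (hD : ∀ f n, coeff n (D f) = Polynomial.derivative (coeff n f) + (n : Polynomial R) * coeff n f)
    (N : ℕ) (f : PowerSeries (Polynomial R)) (n : ℕ) :
    coeff n (D^[N] f) = (shiftedDerivative n)^[N] (coeff n f) := by
  induction N with
  | zero => rfl
  | succ N ih => rw [Function.iterate_succ_apply', Function.iterate_succ_apply', hD, ih]; rfl

lemma coeff_X_add_C_pow_mul (n m j : ℕ) (A : PowerSeries R) :
    coeff j ((X + C (n : R)) ^ (m + j) * A) =
      ∑ p ∈ antidiagonal j, ((m + j).choose p.1 : R) * (n : R) ^ (m + p.2) * coeff p.2 A := by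
  have hpoly : (X + C (n : R)) ^ (m + j) =
      (((Polynomial.X + Polynomial.C (n : R)) ^ (m + j) : Polynomial R) : PowerSeries R) := by
    rw [Polynomial.coe_pow, Polynomial.coe_add, Polynomial.coe_X, Polynomial.coe_C]
  rw [hpoly, coeff_mul]
  refine Finset.sum_congr rfl fun p hp => ?_
  rw [mem_antidiagonal] at hp
  rw [Polynomial.coeff_coe, Polynomial.coeff_X_add_C_pow, show m + j - p.1 = m + p.2 by omega]
  ring

end CommSemiring

section CharZero

variable {K : Type*} [Field K] [CharZero K]

/-- `A(z) e^{tz}`, with `t = Polynomial.X` and `z` the power series variable. -/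
noncomputable def taylorSeries (A : PowerSeries K) : PowerSeries (Polynomial K) :=
  map Polynomial.C A * rescale Polynomial.X (exp (Polynomial K))

lemma coeff_rescale_X_exp (u : ℕ) :
    coeff u (rescale Polynomial.X (exp (Polynomial K))) =
      Polynomial.C ((u.factorial : K)⁻¹) * Polynomial.X ^ u := by
  rw [coeff_rescale, coeff_exp, Polynomial.algebraMap_apply, mul_comm]
  simp

lemma coeff_taylorSeries (A : PowerSeries K) (j : ℕ) :
    coeff j (taylorSeries A) = ∑ r ∈ Finset.range (j + 1),
      Polynomial.C (coeff r A / (j - r).factorial) * Polynomial.X ^ (j - r) := by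
  rw [taylorSeries, coeff_mul, Finset.Nat.sum_antidiagonal_eq_sum_range_succ
    (fun r u => coeff r (map Polynomial.C A) * coeff u (rescale Polynomial.X (exp _)))]
  refine Finset.sum_congr rfl fun r _ => ?_
  rw [coeff_map, coeff_rescale_X_exp, ← mul_assoc, ← map_mul, div_eq_mul_inv]

lemma derivative_coeff_rescale_X_exp (u : ℕ) :
    Polynomial.derivative (coeff u (rescale Polynomial.X (exp (Polynomial K)))) =
      coeff u (X * rescale Polynomial.X (exp (Polynomial K))) := by
  cases u with
  | zero => simp
  | succ u =>
    rw [coeff_succ_X_mul, coeff_rescale_X_exp, coeff_rescale_X_exp,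
      Polynomial.derivative_C_mul_X_pow, Nat.factorial_succ]
    congr 2
    push_cast
    field_simp

lemma derivative_coeff_taylorSeries (A : PowerSeries K) (v : ℕ) :
    Polynomial.derivative (coeff v (taylorSeries A)) = coeff v (X * taylorSeries A) := by
  rw [taylorSeries, mul_left_comm, coeff_mul, coeff_mul, map_sum]
  refine Finset.sum_congr rfl fun p _ => ?_
  rw [coeff_map, Polynomial.derivative_C_mul, derivative_coeff_rescale_X_exp]

lemma shiftedDerivative_coeff_taylorSeries (n : ℕ) (A : PowerSeries K) (v : ℕ) :
    shiftedDerivative n (coeff v (taylorSeries A)) =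
      coeff v (taylorSeries ((X + C (n : K)) * A)) := by
  have hmul : taylorSeries ((X + C (n : K)) * A) =
      X * taylorSeries A + C (n : Polynomial K) * taylorSeries A := by
    simp only [taylorSeries, map_mul, map_add, map_X, map_C, Polynomial.C_eq_natCast]
    ring
  rw [hmul, map_add, coeff_C_mul, ← derivative_coeff_taylorSeries, shiftedDerivative]

lemma iterate_shiftedDerivative_coeff_taylorSeries (n N : ℕ) (A : PowerSeries K) (v : ℕ) :
    (shiftedDerivative n)^[N] (coeff v (taylorSeries A)) =
      coeff v (taylorSeries ((X + C (n : K)) ^ N * A)) := by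
  induction N with
  | zero => simp
  | succ N ih =>
    rw [Function.iterate_succ_apply', ih, shiftedDerivative_coeff_taylorSeries, pow_succ',
      mul_assoc]

lemma sum_antidiagonal_coeff_exp_neg_mul_coeff_taylorSeries (A : PowerSeries K) (j : ℕ) :
    ∑ p ∈ antidiagonal j,
        coeff p.1 (rescale (-Polynomial.X) (exp (Polynomial K))) * coeff p.2 (taylorSeries A) =
      Polynomial.C (coeff j A) := by
  rw [← coeff_mul, taylorSeries, mul_left_comm, exp_mul_exp_eq_exp_add, neg_add_cancel,
    rescale_zero]
  simp

lemma truncated_exp_neg_combination {j : ℕ} (hj : j ≤ 3) (f : ℤ → Polynomial K)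
    (hf : ∀ l < 0, f l = 0) :
    f j - Polynomial.X * f (j - 1) + Polynomial.C (1 / 2 : K) * Polynomial.X ^ 2 * f (j - 2)
        - Polynomial.C (1 / 6 : K) * Polynomial.X ^ 3 * f (j - 3) =
      ∑ p ∈ antidiagonal j, coeff p.1 (rescale (-Polynomial.X) (exp (Polynomial K))) * f p.2 := by
  interval_cases j <;>
    simp [hf, Finset.Nat.sum_antidiagonal_eq_sum_range_succ_mk, Finset.sum_range_succ,
      coeff_rescale, coeff_exp, Polynomial.algebraMap_apply, Nat.factorial] <;> ring

end CharZero

lemma coeff_I_combination_eq_C_coeff (a : ℤ → ℕ → ℚ) (I : ℤ → PowerSeries (Polynomial ℚ))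
    (hIneg : ∀ j : ℤ, j < 0 → I j = 0)
    (hI : ∀ j : ℕ, j ≤ 3 → I j = PowerSeries.mk fun d =>
      ∑ r ∈ Finset.range (j + 1),
        Polynomial.C (a r d / ((j - r).factorial : ℚ)) * Polynomial.X ^ (j - r))
    {D : PowerSeries (Polynomial ℚ) → PowerSeries (Polynomial ℚ)}
    (hD : ∀ f n, coeff n (D f) =
      Polynomial.derivative (coeff n f) + (n : Polynomial ℚ) * coeff n f)
    (N : ℕ) {j : ℕ} (hj : j ≤ 3) (d : ℕ) :
    coeff d (D^[N] (I j)
        - PowerSeries.C Polynomial.X * D^[N] (I ((j : ℤ) - 1))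
        + PowerSeries.C (Polynomial.C (1 / 2 : ℚ) * Polynomial.X ^ 2) * D^[N] (I ((j : ℤ) - 2))
        - PowerSeries.C (Polynomial.C (1 / 6 : ℚ) * Polynomial.X ^ 3) *
            D^[N] (I ((j : ℤ) - 3))) =
      Polynomial.C (coeff j ((X + C (d : ℚ)) ^ N * mk fun r => a r d)) := by
  have hIcoeff : ∀ n : ℕ, n ≤ 3 → coeff d (I n) = coeff n (taylorSeries (mk fun r => a r d)) := by
    intro n hn
    simp only [hI n hn, coeff_mk, coeff_taylorSeries]
  simp only [map_add, map_sub, coeff_C_mul, coeff_iterate_of_coeff_eq_shiftedDerivative hD]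
  rw [truncated_exp_neg_combination hj (fun l => (shiftedDerivative d)^[N] (coeff d (I l)))
    (fun l hl => by simp only [hIneg l hl, map_zero, iterate_shiftedDerivative_zero]),
    ← sum_antidiagonal_coeff_exp_neg_mul_coeff_taylorSeries]
  refine Finset.sum_congr rfl fun p hp => ?_
  rw [hIcoeff p.2 ((antidiagonal.snd_le hp).trans hj),
    iterate_shiftedDerivative_coeff_taylorSeries]

lemma b_combination_eq_sum_choose_mul_a (a b : ℤ → ℕ → ℚ)
    (hb0 : ∀ d : ℕ, b 0 d = (-1 : ℚ) ^ d * a 0 d)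
    (hb1 : ∀ d : ℕ, b 1 d = (-1 : ℚ) ^ (d + 1) * (d : ℚ) * a 1 d)
    (hb2 : ∀ d : ℕ, b 2 d = (-1 : ℚ) ^ d * ((d : ℚ) ^ 2 * a 2 d + (d : ℚ) * a 1 d))
    (hb3 : ∀ d : ℕ, b 3 d = (-1 : ℚ) ^ (d + 1) *
      ((d : ℚ) ^ 3 * a 3 d + 2 * (d : ℚ) ^ 2 * a 2 d + (d : ℚ) * a 1 d))
    (hbneg : ∀ (r : ℤ) (d : ℕ), r < 0 → b r d = 0) (m d : ℕ) {j : ℕ} (hj : j ≤ 3) :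
    (d : ℚ) ^ m * (-1 : ℚ) ^ d *
        (- b j d + ((m + 1 : ℕ) : ℚ) * b ((j : ℤ) - 1) d
          - ((m + 1 + 1).choose 2 : ℚ) * b ((j : ℤ) - 2) d
          + ((m + 1 + 2).choose 3 : ℚ) * b ((j : ℤ) - 3) d) =
      (-1 : ℚ) ^ (j + 1) * ∑ p ∈ antidiagonal j,
        ((m + j).choose p.1 : ℚ) * (d : ℚ) ^ (m + p.2) * a p.2 d := by
  rcases Nat.even_or_odd d with hd | hd <;> interval_cases j <;>
    simp [hd.neg_one_pow, pow_succ, hb0, hb1, hb2, hb3, hbneg,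
      Finset.Nat.sum_antidiagonal_eq_sum_range_succ_mk, Finset.sum_range_succ,
      Nat.cast_choose_eq_descPochhammer_div, descPochhammer_succ_eval, Nat.factorial] <;>
    ring

end GiventalI

open GiventalI

theorem stmt_4_general
    (a b : ℤ → ℕ → ℚ)
    (ha00 : a 0 0 = 1)
    (ha0 : ∀ r : ℤ, r ≠ 0 → a r 0 = 0)
    (hb0 : ∀ d : ℕ, b 0 d = (-1 : ℚ) ^ d * a 0 d)
    (hb1 : ∀ d : ℕ, b 1 d = (-1 : ℚ) ^ (d + 1) * (d : ℚ) * a 1 d)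
    (hb2 : ∀ d : ℕ, b 2 d = (-1 : ℚ) ^ d * ((d : ℚ) ^ 2 * a 2 d + (d : ℚ) * a 1 d))
    (hb3 : ∀ d : ℕ, b 3 d = (-1 : ℚ) ^ (d + 1) *
      ((d : ℚ) ^ 3 * a 3 d + 2 * (d : ℚ) ^ 2 * a 2 d + (d : ℚ) * a 1 d))
    (hbneg : ∀ (r : ℤ) (d : ℕ), r < 0 → b r d = 0)
    (I : ℤ → PowerSeries (Polynomial ℚ))
    (hIneg : ∀ j : ℤ, j < 0 → I j = 0)
    (hI : ∀ j : ℕ, j ≤ 3 → I j = PowerSeries.mk fun d =>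
      ∑ r ∈ Finset.range (j + 1),
        Polynomial.C (a r d / ((j - r).factorial : ℚ)) * Polynomial.X ^ (j - r))
    (D : PowerSeries (Polynomial ℚ) → PowerSeries (Polynomial ℚ))
    (hD : ∀ f n, coeff n (D f) =
      Polynomial.derivative (coeff n f) +
        (n : Polynomial ℚ) * coeff n f)
    (m : ℕ) (hm : 1 ≤ m) (j : ℕ) (hj : j ≤ 3) :
    (PowerSeries.mk fun d : ℕ => if d = 0 then 0 else Polynomial.C
        ((d : ℚ) ^ (m - 1) * (-1 : ℚ) ^ d *
          (- b j d + (m : ℚ) * b ((j : ℤ) - 1) d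
            - ((m + 1).choose 2 : ℚ) * b ((j : ℤ) - 2) d
            + ((m + 2).choose 3 : ℚ) * b ((j : ℤ) - 3) d))) =
    ((-1 : ℚ) ^ (j + 1)) •
      (D^[m + j - 1] (I j)
        - PowerSeries.C Polynomial.X * D^[m + j - 1] (I ((j : ℤ) - 1))
        + PowerSeries.C (Polynomial.C (1 / 2 : ℚ) * Polynomial.X ^ 2) *
            D^[m + j - 1] (I ((j : ℤ) - 2))
        - PowerSeries.C (Polynomial.C (1 / 6 : ℚ) * Polynomial.X ^ 3) *
            D^[m + j - 1] (I ((j : ℤ) - 3)))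
    + (if m = 1 then
        ((-1 : ℚ) ^ j * ((m + j - 1).choose j : ℚ)) • (1 : PowerSeries (Polynomial ℚ))
       else 0) := by
  obtain ⟨m, rfl⟩ : ∃ m', m = m' + 1 := ⟨m - 1, by omega⟩
  rw [show m + 1 + j - 1 = m + j by omega]
  refine PowerSeries.ext fun d => ?_
  rw [map_add, coeff_smul, coeff_I_combination_eq_C_coeff a I hIneg hI hD (m + j) hj d, coeff_mk]
  rcases eq_or_ne d 0 with rfl | hd
  · have hA : (mk fun r => a r 0) = 1 := by
      ext r
      rcases eq_or_ne r 0 with rfl | hr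
      · simp [ha00]
      · simp [coeff_one, hr, ha0 r (by exact_mod_cast hr)]
    simp only [hA]
    split_ifs with hm0 <;> simp_all [pow_succ]
  · simp only [if_neg hd, coeff_X_add_C_pow_mul, coeff_mk, Nat.add_sub_cancel, Polynomial.smul_C,
      smul_eq_mul, ← b_combination_eq_sum_choose_mul_a a b hb0 hb1 hb2 hb3 hbneg m d hj]
    split_ifs <;> simp [coeff_one, hd]

/-- The hypergeometric identity relating the MSP edge coefficients `b_r(d)` to derivatives
of the Givental `I`-function coefficients `I_j`, in the ring `ℚ[t][[q]]` with the
derivation `D = ∂_t + q ∂_q` (where `q` plays the role of `e^t`). -/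
theorem stmt_4
    (a b : ℤ → ℕ → ℚ)
    (ha00 : a 0 0 = 1)
    (ha0 : ∀ r : ℤ, r ≠ 0 → a r 0 = 0)
    (haneg : ∀ (r : ℤ) (d : ℕ), r < 0 → a r d = 0)
    (hav : ∀ d : ℕ, 1 ≤ d → ∀ r : ℕ, r ≤ 3 →
      a r d = coeff r
        ((∏ k ∈ Finset.Icc 1 (5 * d), ((5 : PowerSeries ℚ) * X + C (k : ℚ))) *
         ((∏ k ∈ Finset.Icc 1 d, (X + C (k : ℚ)))⁻¹) ^ 5))
    (hb0 : ∀ d : ℕ, b 0 d = (-1 : ℚ) ^ d * a 0 d)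
    (hb1 : ∀ d : ℕ, b 1 d = (-1 : ℚ) ^ (d + 1) * (d : ℚ) * a 1 d)
    (hb2 : ∀ d : ℕ, b 2 d = (-1 : ℚ) ^ d * ((d : ℚ) ^ 2 * a 2 d + (d : ℚ) * a 1 d))
    (hb3 : ∀ d : ℕ, b 3 d = (-1 : ℚ) ^ (d + 1) *
      ((d : ℚ) ^ 3 * a 3 d + 2 * (d : ℚ) ^ 2 * a 2 d + (d : ℚ) * a 1 d))
    (hbneg : ∀ (r : ℤ) (d : ℕ), r < 0 → b r d = 0)
    (I : ℤ → PowerSeries (Polynomial ℚ))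
    (hIneg : ∀ j : ℤ, j < 0 → I j = 0)
    (hI : ∀ j : ℕ, j ≤ 3 → I j = PowerSeries.mk fun d =>
      ∑ r ∈ Finset.range (j + 1),
        Polynomial.C (a r d / ((j - r).factorial : ℚ)) * Polynomial.X ^ (j - r))
    (D : PowerSeries (Polynomial ℚ) → PowerSeries (Polynomial ℚ))
    (hD : ∀ f n, coeff n (D f) =
      Polynomial.derivative (coeff n f) +
        (n : Polynomial ℚ) * coeff n f)
    (m : ℕ) (hm : 1 ≤ m) (j : ℕ) (hj : j ≤ 3) :
    (PowerSeries.mk fun d : ℕ => if d = 0 then 0 else Polynomial.C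
        ((d : ℚ) ^ (m - 1) * (-1 : ℚ) ^ d *
          (- b j d + (m : ℚ) * b ((j : ℤ) - 1) d
            - ((m + 1).choose 2 : ℚ) * b ((j : ℤ) - 2) d
            + ((m + 2).choose 3 : ℚ) * b ((j : ℤ) - 3) d))) =
    ((-1 : ℚ) ^ (j + 1)) •
      (D^[m + j - 1] (I j)
        - PowerSeries.C Polynomial.X * D^[m + j - 1] (I ((j : ℤ) - 1))
        + PowerSeries.C (Polynomial.C (1 / 2 : ℚ) * Polynomial.X ^ 2) *
            D^[m + j - 1] (I ((j : ℤ) - 2))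
        - PowerSeries.C (Polynomial.C (1 / 6 : ℚ) * Polynomial.X ^ 3) *
            D^[m + j - 1] (I ((j : ℤ) - 3)))
    + (if m = 1 then
        ((-1 : ℚ) ^ j * ((m + j - 1).choose j : ℚ)) • (1 : PowerSeries (Polynomial ℚ))
       else 0) :=
  stmt_4_general a b ha00 ha0 hb0 hb1 hb2 hb3 hbneg I hIneg hI D hD m hm j hj
end

section
/- Let J be an open interval, let I₀, T : J → ℝ be differentiable, and let F be a twice-differentiable real function on an open interval containing T(J). Define I₁ = T·I₀, I₂ = (F′∘T)·I₀, and I₃ = (T·(F′∘T) − 2·(F∘T))·I₀. Then on J one has the Wronskian identity I₀·I₃′ − I₀′·I₃ = I₁·I₂′ − I₁′·I₂. -/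
/-!
Multiplying both entries of a Wronskian `W(f, g) = f g′ − f′ g` by a common factor `w` scales it
by `w²`, so both sides reduce to `I₀²` times a Wronskian of the bracketed functions. What remains
is `(T F′(T) − 2 F(T))′ = T (F′∘T)′ − T′ F′(T)`: the chain rule turns `−2 F(T)` into `−2 F′(T) T′`,
which cancels the `T′ F′(T)` from the product rule and leaves `−T′ F′(T)`.
-/

noncomputable def wronskian (f g : ℝ → ℝ) (t : ℝ) : ℝ :=
  f t * deriv g t - deriv f t * g t

section Wronskian

variable {w f g : ℝ → ℝ} {t : ℝ}

theorem wronskian_self_mul (hw : DifferentiableAt ℝ w t) (hf : DifferentiableAt ℝ f t) :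
    wronskian w (fun s => f s * w s) t = w t ^ 2 * deriv f t := by
  rw [wronskian, deriv_fun_mul hf hw]
  ring

theorem wronskian_mul_mul (hw : DifferentiableAt ℝ w t) (hf : DifferentiableAt ℝ f t)
    (hg : DifferentiableAt ℝ g t) :
    wronskian (fun s => f s * w s) (fun s => g s * w s) t = w t ^ 2 * wronskian f g t := by
  rw [wronskian, wronskian, deriv_fun_mul hf hw, deriv_fun_mul hg hw]
  ring

end Wronskian

theorem deriv_mul_deriv_comp_sub_two_mul_comp {F T : ℝ → ℝ} {t : ℝ}
    (hT : DifferentiableAt ℝ T t) (hF : DifferentiableAt ℝ F (T t))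
    (hF' : DifferentiableAt ℝ (deriv F) (T t)) :
    deriv (fun s => T s * deriv F (T s) - 2 * F (T s)) t =
      wronskian T (fun s => deriv F (T s)) t := by
  have hFT : DifferentiableAt ℝ (fun s => F (T s)) t := hF.comp t hT
  have hF'T : DifferentiableAt ℝ (fun s => deriv F (T s)) t := hF'.comp t hT
  have hchain : deriv (fun s => F (T s)) t = deriv F (T t) * deriv T t := deriv_comp t hF hT
  rw [wronskian, deriv_fun_sub (f := fun s => T s * deriv F (T s)) (hT.mul hF'T)
    (hFT.const_mul 2), deriv_fun_mul hT hF'T, deriv_const_mul 2 hFT, hchain]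
  ring

/-- The symplectic Wronskian identity `I₀I₃′ − I₀′I₃ = I₁I₂′ − I₁′I₂` for the
special-geometry quadruple `(I₀, I₁, I₂, I₃) = I₀·(1, T, F_T, T·F_T − 2F)`. -/
theorem stmt_9 (a b : ℝ) (I₀ T : ℝ → ℝ)
    (hI₀ : DifferentiableOn ℝ I₀ (Set.Ioo a b))
    (hT : DifferentiableOn ℝ T (Set.Ioo a b))
    (c d : ℝ) (hTJ : ∀ t ∈ Set.Ioo a b, T t ∈ Set.Ioo c d)
    (F : ℝ → ℝ) (hF : ContDiffOn ℝ 2 F (Set.Ioo c d))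
    (I₁ I₂ I₃ : ℝ → ℝ)
    (hI₁ : I₁ = fun t => T t * I₀ t)
    (hI₂ : I₂ = fun t => deriv F (T t) * I₀ t)
    (hI₃ : I₃ = fun t => (T t * deriv F (T t) - 2 * F (T t)) * I₀ t) :
    ∀ t ∈ Set.Ioo a b,
      I₀ t * deriv I₃ t - deriv I₀ t * I₃ t = I₁ t * deriv I₂ t - deriv I₁ t * I₂ t := by
  intro t ht
  change wronskian I₀ I₃ t = wronskian I₁ I₂ t
  subst hI₁ hI₂ hI₃
  have hI₀t := hI₀.differentiableAt (isOpen_Ioo.mem_nhds ht)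
  have hTt := hT.differentiableAt (isOpen_Ioo.mem_nhds ht)
  have hTnhds := isOpen_Ioo.mem_nhds (hTJ t ht)
  have hFTt : DifferentiableAt ℝ F (T t) :=
    (hF.differentiableOn (by norm_num)).differentiableAt hTnhds
  have hF'Tt : DifferentiableAt ℝ (deriv F) (T t) :=
    ((hF.deriv_of_isOpen isOpen_Ioo (m := 1) (by norm_num)).differentiableOn
      one_ne_zero).differentiableAt hTnhds
  have hFT : DifferentiableAt ℝ (fun s => F (T s)) t := hFTt.comp t hTt
  have hF'T : DifferentiableAt ℝ (fun s => deriv F (T s)) t := hF'Tt.comp t hTt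
  rw [wronskian_self_mul hI₀t (by fun_prop), wronskian_mul_mul hI₀t hTt hF'T,
    deriv_mul_deriv_comp_sub_two_mul_comp hTt hFTt hF'Tt]
end

section
/- (Yukawa coupling formula.) Given a special-geometry solution datum (J, I₀, T, F) for the quintic Picard–Fuchs operator, the function t ↦ (1 − α(t))·I₀(t)²·T′(t)³·F′′′(T(t)) has identically zero derivative on J, i.e. is locally constant; equivalently, the b₃-relation ∂_t log F_{TTT} + 2∂_t log I₀ + 3∂_t log T′ = C holds on J, where C = α/(1−α). -/
/-!
Write the periods as `yᵢ = I₀ wᵢ` with `w = (1, T, F'(T), T F'(T) - 2 F(T))` and put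
`Ωⱼₖ = W(y₀, y₃) - W(y₁, y₂)` for `W(y, z) = y⁽ʲ⁾ z⁽ᵏ⁾ - z⁽ʲ⁾ y⁽ᵏ⁾`,
so that `Ωⱼₖ' = Ωⱼ₊₁,ₖ + Ωⱼ,ₖ₊₁`.
For four solutions of `L = a D⁴ + b D³ + c D² + e D + f` the Lagrange identity gives
`a Ω₀₄ + b Ω₀₃ + c Ω₀₂ + e Ω₀₁ = 0`. Special geometry makes the periods isotropic, `Ω₀₁ ≡ 0`;
differentiating, `Ω₀₂ ≡ 0`, `Ω₀₃ = -Ω₁₂` and `Ω₀₄ = (Ω₀₃ - Ω₁₂)' = 2 Ω₀₃'`. Hence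
`2 (a Ω₀₃)' = (2 a' - b) Ω₀₃`, which vanishes for the quintic (`a = 1 - α`, `b = -2α`, `α' = α`).
Finally the gauge factor `I₀` only rescales: `Ω₀₃ = -I₀² Ω₁₂(w) = I₀² T'³ F'''(T)`.
-/

open Set Filter
open scoped ContDiff

theorem ContDiffAt.hasDerivAt_iteratedDeriv {f : ℝ → ℝ} {t : ℝ} {k : ℕ}
    (h : ContDiffAt ℝ (k + 1) f t) :
    HasDerivAt (iteratedDeriv k f) (iteratedDeriv (k + 1) f t) t := by
  induction k generalizing f with
  | zero =>
    simpa only [iteratedDeriv_zero, zero_add, iteratedDeriv_one] using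
      (h.differentiableAt one_ne_zero).hasDerivAt
  | succ k ih =>
    rw [iteratedDeriv_succ', iteratedDeriv_succ' (n := k + 1)]
    exact ih (h.derivWithin (by norm_cast))

theorem HasDerivAt.eq_zero_of_eqOn_zero {f : ℝ → ℝ} {f' t : ℝ} {U : Set ℝ}
    (hf : HasDerivAt f f' t) (hU : IsOpen U) (h : EqOn f 0 U) (ht : t ∈ U) : f' = 0 :=
  hf.unique ((hasDerivAt_const t 0).congr_of_eventuallyEq (eventually_of_mem (hU.mem_nhds ht) h))

theorem iteratedDeriv_one_mul {u g : ℝ → ℝ} {t : ℝ} (hu : ContDiffAt ℝ 1 u t)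
    (hg : ContDiffAt ℝ 1 g t) :
    iteratedDeriv 1 (fun s => u s * g s) t =
      iteratedDeriv 1 u t * g t + u t * iteratedDeriv 1 g t := by
  rw [iteratedDeriv_fun_mul hu hg]
  simp only [Nat.reduceAdd, Finset.sum_range_succ, Finset.range_one, Finset.sum_singleton,
    Nat.choose_zero_right, Nat.cast_one, iteratedDeriv_zero, one_mul, tsub_zero, iteratedDeriv_one,
    Nat.choose_self, tsub_self]
  ring

theorem iteratedDeriv_two_mul {u g : ℝ → ℝ} {t : ℝ} (hu : ContDiffAt ℝ 2 u t)
    (hg : ContDiffAt ℝ 2 g t) :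
    iteratedDeriv 2 (fun s => u s * g s) t = iteratedDeriv 2 u t * g t +
      2 * (iteratedDeriv 1 u t * iteratedDeriv 1 g t) + u t * iteratedDeriv 2 g t := by
  rw [iteratedDeriv_fun_mul hu hg]
  simp only [Nat.reduceAdd, Finset.sum_range_succ, Finset.range_one, Finset.sum_singleton,
    Nat.choose_zero_right, Nat.cast_one, iteratedDeriv_zero, one_mul, tsub_zero,
    Nat.choose_succ_self_right, Nat.cast_ofNat, iteratedDeriv_one, Nat.add_one_sub_one,
    Nat.choose_self, tsub_self]
  ring

noncomputable def crossDeriv (j k : ℕ) (y z : ℝ → ℝ) (t : ℝ) : ℝ :=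
  iteratedDeriv j y t * iteratedDeriv k z t - iteratedDeriv j z t * iteratedDeriv k y t

section CrossDeriv

variable {y z u v g : ℝ → ℝ} {t : ℝ}

theorem crossDeriv_self (j : ℕ) (y z : ℝ → ℝ) (t : ℝ) : crossDeriv j j y z t = 0 := by
  unfold crossDeriv; ring

theorem hasDerivAt_crossDeriv {j k n : ℕ} (hj : j < n) (hk : k < n) (hy : ContDiffAt ℝ n y t)
    (hz : ContDiffAt ℝ n z t) :
    HasDerivAt (crossDeriv j k y z)
      (crossDeriv (j + 1) k y z t + crossDeriv j (k + 1) y z t) t := by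
  have hd : ∀ {f : ℝ → ℝ} {i : ℕ}, ContDiffAt ℝ n f t → i < n →
      HasDerivAt (iteratedDeriv i f) (iteratedDeriv (i + 1) f t) t :=
    fun hf hi => (hf.of_le (by exact_mod_cast hi)).hasDerivAt_iteratedDeriv
  exact (((hd hy hj).mul (hd hz hk)).sub ((hd hz hj).mul (hd hy hk))).congr_deriv
    (by unfold crossDeriv; ring)

theorem mul_sub_mul_eq_sum_crossDeriv {L : (ℝ → ℝ) → ℝ → ℝ} {a b c e f : ℝ → ℝ}
    (hL : ∀ y s, L y s = a s * iteratedDeriv 4 y s + b s * iteratedDeriv 3 y s +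
      c s * iteratedDeriv 2 y s + e s * iteratedDeriv 1 y s + f s * y s) (y z : ℝ → ℝ) (t : ℝ) :
    y t * L z t - z t * L y t = a t * crossDeriv 0 4 y z t + b t * crossDeriv 0 3 y z t +
      c t * crossDeriv 0 2 y z t + e t * crossDeriv 0 1 y z t := by
  simp only [hL, crossDeriv, iteratedDeriv_zero]
  ring

theorem crossDeriv_zero_one_mul (hu : ContDiffAt ℝ 1 u t) (hv : ContDiffAt ℝ 1 v t)
    (hg : ContDiffAt ℝ 1 g t) :
    crossDeriv 0 1 (fun s => u s * g s) (fun s => v s * g s) t =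
      g t ^ 2 * crossDeriv 0 1 u v t := by
  simp only [crossDeriv, iteratedDeriv_zero, iteratedDeriv_one_mul hu hg,
    iteratedDeriv_one_mul hv hg]
  ring

theorem crossDeriv_one_two_mul (hu : ContDiffAt ℝ 2 u t) (hv : ContDiffAt ℝ 2 v t)
    (hg : ContDiffAt ℝ 2 g t) :
    crossDeriv 1 2 (fun s => u s * g s) (fun s => v s * g s) t =
      (2 * iteratedDeriv 1 g t ^ 2 - g t * iteratedDeriv 2 g t) * crossDeriv 0 1 u v t +
      g t * iteratedDeriv 1 g t * crossDeriv 0 2 u v t + g t ^ 2 * crossDeriv 1 2 u v t := by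
  simp only [crossDeriv, iteratedDeriv_zero, iteratedDeriv_two_mul hu hg,
    iteratedDeriv_two_mul hv hg, iteratedDeriv_one_mul (hu.of_le one_le_two) (hg.of_le one_le_two),
    iteratedDeriv_one_mul (hv.of_le one_le_two) (hg.of_le one_le_two)]
  ring

end CrossDeriv

/-- In the period basis `(I₀, I₁, I₂, I₃)` the intersection form pairs `I₀` with `I₃` and
`I₁` with `I₂`. -/
def symplecticSum (B : (ℝ → ℝ) → (ℝ → ℝ) → ℝ → ℝ) (y₀ y₁ y₂ y₃ : ℝ → ℝ) (t : ℝ) : ℝ :=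
  B y₀ y₃ t - B y₁ y₂ t

section SymplecticSum

variable {U : Set ℝ} {y₀ y₁ y₂ y₃ : ℝ → ℝ} {t : ℝ}

theorem hasDerivAt_symplecticSum_crossDeriv {j k n : ℕ} (hj : j < n) (hk : k < n)
    (h₀ : ContDiffAt ℝ n y₀ t) (h₁ : ContDiffAt ℝ n y₁ t) (h₂ : ContDiffAt ℝ n y₂ t)
    (h₃ : ContDiffAt ℝ n y₃ t) :
    HasDerivAt (symplecticSum (crossDeriv j k) y₀ y₁ y₂ y₃)
      (symplecticSum (crossDeriv (j + 1) k) y₀ y₁ y₂ y₃ t +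
        symplecticSum (crossDeriv j (k + 1)) y₀ y₁ y₂ y₃ t) t :=
  ((hasDerivAt_crossDeriv hj hk h₀ h₃).sub (hasDerivAt_crossDeriv hj hk h₁ h₂)).congr_deriv
    (by unfold symplecticSum; ring)

theorem symplecticSum_crossDeriv_zero_one_mul {u₀ u₁ u₂ u₃ g : ℝ → ℝ}
    (h₀ : ContDiffAt ℝ 1 u₀ t) (h₁ : ContDiffAt ℝ 1 u₁ t) (h₂ : ContDiffAt ℝ 1 u₂ t)
    (h₃ : ContDiffAt ℝ 1 u₃ t) (hg : ContDiffAt ℝ 1 g t) :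
    symplecticSum (crossDeriv 0 1) (fun s => u₀ s * g s) (fun s => u₁ s * g s)
      (fun s => u₂ s * g s) (fun s => u₃ s * g s) t =
      g t ^ 2 * symplecticSum (crossDeriv 0 1) u₀ u₁ u₂ u₃ t := by
  simp only [symplecticSum, crossDeriv_zero_one_mul h₀ h₃ hg, crossDeriv_zero_one_mul h₁ h₂ hg]
  ring

theorem symplecticSum_crossDeriv_one_two_mul {u₀ u₁ u₂ u₃ g : ℝ → ℝ}
    (h₀ : ContDiffAt ℝ 2 u₀ t) (h₁ : ContDiffAt ℝ 2 u₁ t) (h₂ : ContDiffAt ℝ 2 u₂ t)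
    (h₃ : ContDiffAt ℝ 2 u₃ t) (hg : ContDiffAt ℝ 2 g t) :
    symplecticSum (crossDeriv 1 2) (fun s => u₀ s * g s) (fun s => u₁ s * g s)
      (fun s => u₂ s * g s) (fun s => u₃ s * g s) t =
      (2 * iteratedDeriv 1 g t ^ 2 - g t * iteratedDeriv 2 g t) *
        symplecticSum (crossDeriv 0 1) u₀ u₁ u₂ u₃ t +
      g t * iteratedDeriv 1 g t * symplecticSum (crossDeriv 0 2) u₀ u₁ u₂ u₃ t +
      g t ^ 2 * symplecticSum (crossDeriv 1 2) u₀ u₁ u₂ u₃ t := by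
  simp only [symplecticSum, crossDeriv_one_two_mul h₀ h₃ hg, crossDeriv_one_two_mul h₁ h₂ hg]
  ring

theorem eqOn_symplecticSum_crossDeriv_zero_two (hU : IsOpen U) (h₀ : ContDiffOn ℝ 2 y₀ U)
    (h₁ : ContDiffOn ℝ 2 y₁ U) (h₂ : ContDiffOn ℝ 2 y₂ U) (h₃ : ContDiffOn ℝ 2 y₃ U)
    (hiso : EqOn (symplecticSum (crossDeriv 0 1) y₀ y₁ y₂ y₃) 0 U) :
    EqOn (symplecticSum (crossDeriv 0 2) y₀ y₁ y₂ y₃) 0 U := by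
  intro s hs
  have hsU := hU.mem_nhds hs
  have hd := hasDerivAt_symplecticSum_crossDeriv (j := 0) (k := 1) (by norm_num) (by norm_num)
    (h₀.contDiffAt hsU) (h₁.contDiffAt hsU) (h₂.contDiffAt hsU) (h₃.contDiffAt hsU)
  simpa [symplecticSum, crossDeriv_self] using hd.eq_zero_of_eqOn_zero hU hiso hs

theorem eqOn_symplecticSum_crossDeriv_zero_three (hU : IsOpen U) (h₀ : ContDiffOn ℝ 3 y₀ U)
    (h₁ : ContDiffOn ℝ 3 y₁ U) (h₂ : ContDiffOn ℝ 3 y₂ U) (h₃ : ContDiffOn ℝ 3 y₃ U)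
    (hiso : EqOn (symplecticSum (crossDeriv 0 1) y₀ y₁ y₂ y₃) 0 U) :
    EqOn (symplecticSum (crossDeriv 0 3) y₀ y₁ y₂ y₃)
      (-symplecticSum (crossDeriv 1 2) y₀ y₁ y₂ y₃) U := by
  intro s hs
  have hsU := hU.mem_nhds hs
  have hd := hasDerivAt_symplecticSum_crossDeriv (j := 0) (k := 2) (by norm_num) (by norm_num)
    (h₀.contDiffAt hsU) (h₁.contDiffAt hsU) (h₂.contDiffAt hsU) (h₃.contDiffAt hsU)
  have hΩ₂ := eqOn_symplecticSum_crossDeriv_zero_two hU (h₀.of_le (by norm_num))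
    (h₁.of_le (by norm_num)) (h₂.of_le (by norm_num)) (h₃.of_le (by norm_num)) hiso
  have := hd.eq_zero_of_eqOn_zero hU hΩ₂ hs
  rw [Pi.neg_apply]
  linarith

theorem hasDerivAt_symplecticSum_crossDeriv_zero_three (hU : IsOpen U)
    (h₀ : ContDiffOn ℝ 4 y₀ U) (h₁ : ContDiffOn ℝ 4 y₁ U) (h₂ : ContDiffOn ℝ 4 y₂ U)
    (h₃ : ContDiffOn ℝ 4 y₃ U) (hiso : EqOn (symplecticSum (crossDeriv 0 1) y₀ y₁ y₂ y₃) 0 U)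
    (ht : t ∈ U) :
    HasDerivAt (symplecticSum (crossDeriv 0 3) y₀ y₁ y₂ y₃)
      (symplecticSum (crossDeriv 0 4) y₀ y₁ y₂ y₃ t / 2) t := by
  have htU := hU.mem_nhds ht
  have hd := fun {j k : ℕ} (hj : j < 4) (hk : k < 4) => hasDerivAt_symplecticSum_crossDeriv hj hk
    (h₀.contDiffAt htU) (h₁.contDiffAt htU) (h₂.contDiffAt htU) (h₃.contDiffAt htU)
  have h03 := eqOn_symplecticSum_crossDeriv_zero_three hU (h₀.of_le (by norm_num))
    (h₁.of_le (by norm_num)) (h₂.of_le (by norm_num)) (h₃.of_le (by norm_num)) hiso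
  -- `Ω₀₃ - Ω₁₂` has derivative `Ω₀₄`, and equals `2 Ω₀₃` near `t`
  have h2Ω : HasDerivAt (fun s => 2 * symplecticSum (crossDeriv 0 3) y₀ y₁ y₂ y₃ s)
      (symplecticSum (crossDeriv 0 4) y₀ y₁ y₂ y₃ t) t := by
    refine (((hd (j := 0) (k := 3) (by norm_num) (by norm_num)).sub
      (hd (j := 1) (k := 2) (by norm_num) (by norm_num))).congr_deriv ?_).congr_of_eventuallyEq ?_
    · simp [symplecticSum, crossDeriv_self]
    · filter_upwards [htU] with s hs
      have := h03 hs
      simp only [Pi.neg_apply] at this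
      simp only [Pi.sub_apply]
      linarith
  have := h2Ω.const_mul (2⁻¹ : ℝ)
  simp only [← mul_assoc, inv_mul_cancel₀ (two_ne_zero (α := ℝ)), one_mul] at this
  exact this.congr_deriv (inv_mul_eq_div _ _)

end SymplecticSum

theorem hasDerivAt_mul_symplecticSum_crossDeriv_zero_three_eq_zero {U : Set ℝ}
    {y₀ y₁ y₂ y₃ : ℝ → ℝ} {t : ℝ} {L : (ℝ → ℝ) → ℝ → ℝ} {a b c e f : ℝ → ℝ}
    (hL : ∀ y s, L y s = a s * iteratedDeriv 4 y s + b s * iteratedDeriv 3 y s +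
      c s * iteratedDeriv 2 y s + e s * iteratedDeriv 1 y s + f s * y s)
    (ha : HasDerivAt a (b t / 2) t) (hU : IsOpen U) (h₀ : ContDiffOn ℝ 4 y₀ U)
    (h₁ : ContDiffOn ℝ 4 y₁ U) (h₂ : ContDiffOn ℝ 4 y₂ U) (h₃ : ContDiffOn ℝ 4 y₃ U)
    (hiso : EqOn (symplecticSum (crossDeriv 0 1) y₀ y₁ y₂ y₃) 0 U) (ht : t ∈ U)
    (hL₀ : L y₀ t = 0) (hL₁ : L y₁ t = 0) (hL₂ : L y₂ t = 0) (hL₃ : L y₃ t = 0) :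
    HasDerivAt (fun s => a s * symplecticSum (crossDeriv 0 3) y₀ y₁ y₂ y₃ s) 0 t := by
  have hΩ₁ := hiso ht
  have hΩ₂ := eqOn_symplecticSum_crossDeriv_zero_two hU (h₀.of_le (by norm_num))
    (h₁.of_le (by norm_num)) (h₂.of_le (by norm_num)) (h₃.of_le (by norm_num)) hiso ht
  have hlag : a t * symplecticSum (crossDeriv 0 4) y₀ y₁ y₂ y₃ t +
      b t * symplecticSum (crossDeriv 0 3) y₀ y₁ y₂ y₃ t = 0 := by
    have h₀₃ := mul_sub_mul_eq_sum_crossDeriv hL y₀ y₃ t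
    have h₁₂ := mul_sub_mul_eq_sum_crossDeriv hL y₁ y₂ t
    rw [hL₀, hL₃] at h₀₃
    rw [hL₁, hL₂] at h₁₂
    simp only [symplecticSum, Pi.zero_apply] at hΩ₁ hΩ₂ ⊢
    linear_combination h₁₂ - h₀₃ - c t * hΩ₂ - e t * hΩ₁
  exact (ha.mul (hasDerivAt_symplecticSum_crossDeriv_zero_three hU h₀ h₁ h₂ h₃ hiso ht)).congr_deriv
    (by linear_combination hlag / 2)

section SpecialCoords

variable {T F : ℝ → ℝ} {t : ℝ}

theorem symplecticSum_crossDeriv_zero_one_specialCoords (hT : DifferentiableAt ℝ T t)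
    (hF : ContDiffAt ℝ 2 F (T t)) :
    symplecticSum (crossDeriv 0 1) (fun _ => 1) T (fun s => deriv F (T s))
      (fun s => T s * deriv F (T s) - 2 * F (T s)) t = 0 := by
  have hF₀ : HasDerivAt F (deriv F (T t)) (T t) :=
    (hF.differentiableAt two_ne_zero).hasDerivAt
  have hG : HasDerivAt (fun s => deriv F (T s)) (deriv (deriv F) (T t) * deriv T t) t :=
    ((hF.derivWithin (m := 1) (by norm_num)).differentiableAt one_ne_zero).hasDerivAt.comp t
      hT.hasDerivAt
  have hW : HasDerivAt (fun s => T s * deriv F (T s) - 2 * F (T s))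
      (deriv T t * deriv F (T t) + T t * (deriv (deriv F) (T t) * deriv T t) -
        2 * (deriv F (T t) * deriv T t)) t :=
    (hT.hasDerivAt.mul hG).sub ((hF₀.comp t hT.hasDerivAt).const_mul 2)
  simp only [symplecticSum, crossDeriv, iteratedDeriv_const, ↓reduceIte, iteratedDeriv_one,
    hW.deriv, one_mul, iteratedDeriv_zero, one_ne_zero, mul_zero, sub_zero, hG.deriv]
  ring

theorem symplecticSum_crossDeriv_one_two_specialCoords (hT : ContDiffAt ℝ 2 T t)
    (hF : ContDiffAt ℝ 3 F (T t)) :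
    symplecticSum (crossDeriv 1 2) (fun _ => 1) T (fun s => deriv F (T s))
      (fun s => T s * deriv F (T s) - 2 * F (T s)) t =
      -(deriv T t ^ 3 * iteratedDeriv 3 F (T t)) := by
  have hF' : ContDiffAt ℝ 2 (deriv F) (T t) := hF.derivWithin (by norm_num)
  have hG : HasDerivAt (fun s => deriv F (T s)) (deriv (deriv F) (T t) * deriv T t) t :=
    (hF'.differentiableAt two_ne_zero).hasDerivAt.comp t
      (hT.differentiableAt two_ne_zero).hasDerivAt
  have hG₂ := iteratedDeriv_comp_two hF' hT
  rw [Function.comp_def, ← iteratedDeriv_succ'] at hG₂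
  simp only [symplecticSum, crossDeriv, iteratedDeriv_const, one_ne_zero, ↓reduceIte, zero_mul,
    iteratedDeriv_one, OfNat.ofNat_ne_zero, mul_zero, sub_self, hG₂, Nat.reduceAdd, hG.deriv,
    zero_sub, neg_sub]
  ring

variable {U V : Set ℝ} {n : ℕ}

theorem ContDiffOn.deriv_comp_of_isOpen (hF : ContDiffOn ℝ (n + 1) F V) (hV : IsOpen V)
    (hT : ContDiffOn ℝ n T U) (hTV : MapsTo T U V) :
    ContDiffOn ℝ n (fun s => deriv F (T s)) U :=
  (hF.deriv_of_isOpen hV le_rfl).comp hT hTV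

theorem contDiffOn_dualCoord (hF : ContDiffOn ℝ (n + 1) F V) (hV : IsOpen V)
    (hT : ContDiffOn ℝ n T U) (hTV : MapsTo T U V) :
    ContDiffOn ℝ n (fun s => T s * deriv F (T s) - 2 * F (T s)) U :=
  (hT.mul (hF.deriv_comp_of_isOpen hV hT hTV)).sub
    (contDiffOn_const.mul ((hF.of_le (by norm_cast; omega)).comp hT hTV))

variable {I₀ : ℝ → ℝ}

theorem eqOn_symplecticSum_crossDeriv_zero_one_periods (hU : IsOpen U) (hV : IsOpen V)
    (hI₀ : ContDiffOn ℝ 1 I₀ U) (hT : ContDiffOn ℝ 1 T U) (hF : ContDiffOn ℝ 2 F V)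
    (hTV : MapsTo T U V) :
    EqOn (symplecticSum (crossDeriv 0 1) (fun s => 1 * I₀ s) (fun s => T s * I₀ s)
      (fun s => deriv F (T s) * I₀ s) (fun s => (T s * deriv F (T s) - 2 * F (T s)) * I₀ s))
      0 U := by
  intro s hs
  have hsU := hU.mem_nhds hs
  rw [symplecticSum_crossDeriv_zero_one_mul (contDiffAt_const (c := 1)) (hT.contDiffAt hsU)
    ((hF.deriv_comp_of_isOpen hV hT hTV).contDiffAt hsU)
    ((contDiffOn_dualCoord hF hV hT hTV).contDiffAt hsU) (hI₀.contDiffAt hsU),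
    symplecticSum_crossDeriv_zero_one_specialCoords
      ((hT.contDiffAt hsU).differentiableAt one_ne_zero) (hF.contDiffAt (hV.mem_nhds (hTV hs))),
    mul_zero, Pi.zero_apply]

theorem eqOn_symplecticSum_crossDeriv_zero_three_periods (hU : IsOpen U) (hV : IsOpen V)
    (hI₀ : ContDiffOn ℝ 3 I₀ U) (hT : ContDiffOn ℝ 3 T U) (hF : ContDiffOn ℝ 4 F V)
    (hTV : MapsTo T U V) :
    EqOn (symplecticSum (crossDeriv 0 3) (fun s => 1 * I₀ s) (fun s => T s * I₀ s)
      (fun s => deriv F (T s) * I₀ s) (fun s => (T s * deriv F (T s) - 2 * F (T s)) * I₀ s))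
      (fun s => I₀ s ^ 2 * deriv T s ^ 3 * iteratedDeriv 3 F (T s)) U := by
  intro s hs
  have hsU := hU.mem_nhds hs
  have hG := hF.deriv_comp_of_isOpen (n := 3) hV hT hTV
  have hW := contDiffOn_dualCoord (n := 3) hF hV hT hTV
  have hw_iso : EqOn (symplecticSum (crossDeriv 0 1) (fun _ => 1) T (fun s => deriv F (T s))
      (fun s => T s * deriv F (T s) - 2 * F (T s))) 0 U := fun s hs =>
    symplecticSum_crossDeriv_zero_one_specialCoords
      ((hT.contDiffAt (hU.mem_nhds hs)).differentiableAt (by norm_num))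
      ((hF.contDiffAt (hV.mem_nhds (hTV hs))).of_le (by norm_num))
  have hgauge := symplecticSum_crossDeriv_one_two_mul (contDiffAt_const (c := 1))
    ((hT.contDiffAt hsU).of_le (by norm_num)) ((hG.contDiffAt hsU).of_le (by norm_num))
    ((hW.contDiffAt hsU).of_le (by norm_num)) ((hI₀.contDiffAt hsU).of_le (by norm_num))
  beta_reduce at hgauge
  rw [eqOn_symplecticSum_crossDeriv_zero_three hU (contDiffOn_const.mul hI₀) (hT.mul hI₀)
      (hG.mul hI₀) (hW.mul hI₀)
      (eqOn_symplecticSum_crossDeriv_zero_one_periods hU hV (hI₀.of_le (by norm_num))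
        (hT.of_le (by norm_num)) (hF.of_le (by norm_num)) hTV) hs,
    Pi.neg_apply, hgauge, hw_iso hs,
    eqOn_symplecticSum_crossDeriv_zero_two hU contDiffOn_const (hT.of_le (by norm_num))
      (hG.of_le (by norm_num)) (hW.of_le (by norm_num)) hw_iso hs,
    symplecticSum_crossDeriv_one_two_specialCoords ((hT.contDiffAt hsU).of_le (by norm_num))
      ((hF.contDiffAt (hV.mem_nhds (hTV hs))).of_le (by norm_num)), Pi.zero_apply]
  ring

end SpecialCoords

theorem stmt_14_general (A B : ℝ)
    (α : ℝ → ℝ) (hα : ∀ t, α t = 5 ^ 5 * Real.exp t)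
    (L : (ℝ → ℝ) → ℝ → ℝ)
    (hL : ∀ y t, L y t = (1 - α t) * iteratedDeriv 4 y t -
      α t * (2 * iteratedDeriv 3 y t + (7 / 5) * iteratedDeriv 2 y t +
        (2 / 5) * deriv y t + (24 / 625) * y t))
    (I₀ T : ℝ → ℝ)
    (hI₀s : ContDiffOn ℝ (⊤ : ℕ∞) I₀ (Set.Ioo A B))
    (hTs : ContDiffOn ℝ (⊤ : ℕ∞) T (Set.Ioo A B))
    (c d : ℝ) (hTJ : ∀ t ∈ Set.Ioo A B, T t ∈ Set.Ioo c d)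
    (F : ℝ → ℝ) (hFs : ContDiffOn ℝ (⊤ : ℕ∞) F (Set.Ioo c d))
    (hsol0 : ∀ t ∈ Set.Ioo A B, L I₀ t = 0)
    (hsol1 : ∀ t ∈ Set.Ioo A B, L (fun s => T s * I₀ s) t = 0)
    (hsol2 : ∀ t ∈ Set.Ioo A B, L (fun s => deriv F (T s) * I₀ s) t = 0)
    (hsol3 : ∀ t ∈ Set.Ioo A B,
      L (fun s => (T s * deriv F (T s) - 2 * F (T s)) * I₀ s) t = 0) :
    ∀ t ∈ Set.Ioo A B,
      deriv (fun s => (1 - α s) * I₀ s ^ 2 * (deriv T s) ^ 3 * iteratedDeriv 3 F (T s)) t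
        = 0 := by
  intro t ht
  have hI₀ : ContDiffOn ℝ 4 I₀ (Ioo A B) := hI₀s.of_le (by norm_cast)
  have hT : ContDiffOn ℝ 4 T (Ioo A B) := hTs.of_le (by norm_cast)
  have hF : ContDiffOn ℝ 5 F (Ioo c d) := hFs.of_le (by norm_cast)
  have hΩ₃ := eqOn_symplecticSum_crossDeriv_zero_three_periods isOpen_Ioo isOpen_Ioo
    (hI₀.of_le (by norm_num)) (hT.of_le (by norm_num)) (hF.of_le (by norm_num)) hTJ
  -- `α' = α`, so the leading coefficient `a = 1 - α` satisfies `a' = b / 2` with `b = -2α`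
  have hα' : HasDerivAt (fun s => 1 - α s) (-2 * α t / 2) t := by
    simp only [hα]
    exact (((Real.hasDerivAt_exp t).const_mul _).const_sub 1).congr_deriv (by ring)
  have key := hasDerivAt_mul_symplecticSum_crossDeriv_zero_three_eq_zero (a := fun s => 1 - α s)
    (b := fun s => -2 * α s) (c := fun s => -(7 / 5) * α s) (e := fun s => -(2 / 5) * α s)
    (f := fun s => -(24 / 625) * α s) (fun y s => by rw [hL, iteratedDeriv_one]; ring) hα'
    isOpen_Ioo (contDiffOn_const.mul hI₀) (hT.mul hI₀)
    ((hF.deriv_comp_of_isOpen isOpen_Ioo hT hTJ).mul hI₀)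
    ((contDiffOn_dualCoord hF isOpen_Ioo hT hTJ).mul hI₀)
    (eqOn_symplecticSum_crossDeriv_zero_one_periods isOpen_Ioo isOpen_Ioo (hI₀.of_le (by norm_num))
      (hT.of_le (by norm_num)) (hF.of_le (by norm_num)) hTJ) ht
    (by simpa only [one_mul] using hsol0 t ht) (hsol1 t ht) (hsol2 t ht) (hsol3 t ht)
  refine (key.congr_of_eventuallyEq ?_).deriv
  filter_upwards [isOpen_Ioo.mem_nhds ht] with s hs
  rw [hΩ₃ hs]
  ring

/-- Yukawa coupling formula: for a special-geometry solution datum of the quintic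
Picard–Fuchs operator, `(1−α)·I₀²·(T′)³·F‴(T)` has identically zero derivative on `J`;
this is the `b₃`-relation `∂_t log F_TTT + 2∂_t log I₀ + 3∂_t log T′ = C`. -/
theorem stmt_14 (A B : ℝ)
    (α : ℝ → ℝ) (hα : ∀ t, α t = 5 ^ 5 * Real.exp t)
    (L : (ℝ → ℝ) → ℝ → ℝ)
    (hL : ∀ y t, L y t = (1 - α t) * iteratedDeriv 4 y t -
      α t * (2 * iteratedDeriv 3 y t + (7 / 5) * iteratedDeriv 2 y t +
        (2 / 5) * deriv y t + (24 / 625) * y t))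
    (hα1 : ∀ t ∈ Set.Ioo A B, α t ≠ 1)
    (I₀ T : ℝ → ℝ)
    (hI₀s : ContDiffOn ℝ (⊤ : ℕ∞) I₀ (Set.Ioo A B))
    (hTs : ContDiffOn ℝ (⊤ : ℕ∞) T (Set.Ioo A B))
    (hI₀0 : ∀ t ∈ Set.Ioo A B, I₀ t ≠ 0)
    (hT' : ∀ t ∈ Set.Ioo A B, deriv T t ≠ 0)
    (c d : ℝ) (hTJ : ∀ t ∈ Set.Ioo A B, T t ∈ Set.Ioo c d)
    (F : ℝ → ℝ) (hFs : ContDiffOn ℝ (⊤ : ℕ∞) F (Set.Ioo c d))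
    (hF3 : ∀ x ∈ Set.Ioo c d, iteratedDeriv 3 F x ≠ 0)
    (hsol0 : ∀ t ∈ Set.Ioo A B, L I₀ t = 0)
    (hsol1 : ∀ t ∈ Set.Ioo A B, L (fun s => T s * I₀ s) t = 0)
    (hsol2 : ∀ t ∈ Set.Ioo A B, L (fun s => deriv F (T s) * I₀ s) t = 0)
    (hsol3 : ∀ t ∈ Set.Ioo A B,
      L (fun s => (T s * deriv F (T s) - 2 * F (T s)) * I₀ s) t = 0) :
    ∀ t ∈ Set.Ioo A B,
      deriv (fun s => (1 - α s) * I₀ s ^ 2 * (deriv T s) ^ 3 * iteratedDeriv 3 F (T s)) t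
        = 0 :=
  stmt_14_general A B α hα L hL I₀ T hI₀s hTs c d hTJ F hFs hsol0 hsol1 hsol2 hsol3
end
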